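/- For every θ ∈ ℂ with 0 < Im θ < 2π, the function t ↦ (1/t)·[2·sinh(t(N−1)/N)·cosh(t/N)/sinh²(t)]·(1 − cosh(t(1 − θ/(iπ)))) is integrable on (0,∞), and the function F̂^Z(θ) = exp of this integral is holomorphic (complex differentiable) on the open strip {θ : 0 < Im θ < 2π}. -/

import Mathlib

open Complex MeasureTheory

/-- The integrand of the minimal form factor of the `Z_N`-Ising model:
`(1/t)·[2·sinh(t(N−1)/N)·cosh(t/N)/sinh²(t)]·(1 − cosh(t(1 − θ/(iπ))))`. -/
noncomputable def fZ (N : ℕ) (θ : ℂ) (t : ℝ) : ℂ :=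
  (1 / (t : ℂ)) *
    (2 * Complex.sinh ((t : ℂ) * (N - 1) / N) * Complex.cosh ((t : ℂ) / N) /
      (Complex.sinh (t : ℂ)) ^ 2) *
    (1 - Complex.cosh ((t : ℂ) * (1 - θ / (I * (Real.pi : ℂ)))))

/-- The minimal form factor of the `Z_N`-Ising model (up to normalization). -/
noncomputable def FZhat (N : ℕ) (θ : ℂ) : ℂ :=
  Complex.exp (∫ t in Set.Ioi (0 : ℝ), fZ N θ t)

/-!
With `w = 1 - θ / (iπ)` the strip `0 < Im θ < 2π` becomes `|Re w| < 1`, and the integrand is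
`g(t) (1 - cosh (t w))`. Since `2 sinh x cosh y ≤ 2 sinh (x + y)`, the weight satisfies
`|g(t)| ≤ 2 / (t sinh t)`. The mean value inequality on strips gives `|sinh u| ≤ |u| cosh (Re u)`
and `|cosh u - 1| ≤ |u|² cosh (Re u)`, so for `|Re w| ≤ r < 1` the integrand and its
`w`-derivative are both dominated by a multiple of `t cosh (r t) / sinh t ≤ (1 + 2t) e^{-(1-r)t}`.
Differentiation under the integral sign then makes the integral holomorphic in `w`.
-/

open Set Filter Topology

namespace Complex

lemma norm_cosh_le_cosh_re (w : ℂ) : ‖cosh w‖ ≤ Real.cosh w.re := by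
  have h := norm_add_le (exp w) (exp (-w))
  rw [norm_exp, norm_exp, neg_re] at h
  rw [cosh, norm_div, Complex.norm_two, Real.cosh_eq]
  linarith

lemma convex_abs_re_le (c : ℝ) : Convex ℝ {v : ℂ | |v.re| ≤ c} := by
  have h : {v : ℂ | |v.re| ≤ c} = reLm ⁻¹' Icc (-c) c := by ext v; simp [abs_le]
  exact h ▸ (convex_Icc (-c) c).linear_preimage reLm

lemma norm_sinh_le (w : ℂ) : ‖sinh w‖ ≤ ‖w‖ * Real.cosh w.re := by
  have hbound : ∀ v ∈ {v : ℂ | |v.re| ≤ |w.re|}, ‖deriv sinh v‖ ≤ Real.cosh w.re :=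
    fun v hv => by
      rw [Complex.deriv_sinh]
      exact (norm_cosh_le_cosh_re v).trans (Real.cosh_le_cosh.2 hv)
  simpa [mul_comm] using (convex_abs_re_le |w.re|).norm_image_sub_le_of_norm_deriv_le
    (fun v _ => differentiableAt_sinh) hbound (x := 0) (y := w) (by simp) (by simp)

lemma norm_cosh_sub_one_le (w : ℂ) : ‖cosh w - 1‖ ≤ ‖w‖ ^ 2 * Real.cosh w.re := by
  have hbound : ∀ v ∈ {v : ℂ | |v.re| ≤ |w.re|} ∩ Metric.closedBall 0 ‖w‖,
      ‖deriv cosh v‖ ≤ ‖w‖ * Real.cosh w.re := fun v ⟨hre, hnorm⟩ => by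
    rw [Complex.deriv_cosh]
    refine (norm_sinh_le v).trans (mul_le_mul ?_ (Real.cosh_le_cosh.2 hre)
      (Real.cosh_pos _).le (norm_nonneg w))
    simpa using hnorm
  have h := ((convex_abs_re_le |w.re|).inter (convex_closedBall 0 ‖w‖)).norm_image_sub_le_of_norm_deriv_le
    (fun v _ => differentiableAt_cosh) hbound (x := 0) (y := w) (by simp) (by simp)
  simpa [pow_two, mul_comm, mul_left_comm, mul_assoc] using h

end Complex

namespace Real

lemma mul_exp_le_one_add_two_mul_mul_sinh (t : ℝ) : t * exp t ≤ (1 + 2 * t) * sinh t := by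
  have h := add_one_le_exp (2 * t)
  rw [show 2 * t = t + t by ring, exp_add] at h
  have hpos := exp_pos t
  have hdiff : (1 + 2 * t) * sinh t - t * exp t = (exp t * exp t - (t + t + 1)) / (2 * exp t) := by
    rw [sinh_eq, exp_neg]; field_simp; ring
  rw [← sub_nonneg, hdiff]
  apply div_nonneg <;> linarith

lemma abs_sinh_mul_cosh_le {x y t : ℝ} (h : |x| + |y| ≤ t) : |sinh x * cosh y| ≤ sinh t := by
  rw [abs_mul, abs_sinh, abs_of_pos (cosh_pos y), ← cosh_abs y]
  calc sinh |x| * cosh |y| ≤ sinh |x| * cosh |y| + cosh |x| * sinh |y| :=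
        le_add_of_nonneg_right (mul_nonneg (cosh_pos _).le (sinh_nonneg_iff.2 (abs_nonneg y)))
    _ = sinh (|x| + |y|) := (sinh_add _ _).symm
    _ ≤ sinh t := sinh_le_sinh.2 h

lemma cosh_le_exp_abs (x : ℝ) : cosh x ≤ exp |x| := by
  rw [← cosh_abs, cosh_eq]
  have : exp (-|x|) ≤ exp |x| := exp_le_exp.2 (by linarith [abs_nonneg x])
  linarith

lemma mul_cosh_mul_div_sinh_le {t x r : ℝ} (ht : 0 < t) (hx : |x| ≤ r) :
    t * cosh (t * x) / sinh t ≤ (1 + 2 * t) * exp (-(1 - r) * t) := by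
  have hcosh : cosh (t * x) ≤ exp (t * r) := by
    refine (cosh_le_exp_abs _).trans (exp_le_exp.2 ?_)
    rw [abs_mul, abs_of_pos ht]
    exact mul_le_mul_of_nonneg_left hx ht.le
  have hsplit : exp (t * r) = exp t * exp (-(1 - r) * t) := by rw [← exp_add]; ring_nf
  rw [div_le_iff₀ (sinh_pos_iff.2 ht)]
  calc t * cosh (t * x) ≤ t * exp t * exp (-(1 - r) * t) := by
        rw [mul_assoc, ← hsplit]; exact mul_le_mul_of_nonneg_left hcosh ht.le
    _ ≤ (1 + 2 * t) * sinh t * exp (-(1 - r) * t) :=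
        mul_le_mul_of_nonneg_right (mul_exp_le_one_add_two_mul_mul_sinh t) (exp_pos _).le
    _ = (1 + 2 * t) * exp (-(1 - r) * t) * sinh t := by ring

end Real

lemma integrableOn_one_add_two_mul_mul_exp_neg {c : ℝ} (hc : 0 < c) :
    IntegrableOn (fun t => (1 + 2 * t) * Real.exp (-c * t)) (Ioi 0) := by
  have h1 := exp_neg_integrableOn_Ioi 0 hc
  have h2 : IntegrableOn (fun t : ℝ => t * Real.exp (-c * t)) (Ioi 0) := by
    simpa using integrableOn_rpow_mul_exp_neg_mul_rpow (s := 1) (p := 1) (by norm_num) one_pos hc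
  refine (h1.add (h2.const_mul 2)).congr_fun (fun t _ => ?_) measurableSet_Ioi
  simp only [Pi.add_apply]
  ring

section StripIntegral

variable {g : ℝ → ℂ} {C : ℝ}

lemma nonneg_of_forall_norm_le_div_mul_sinh (hg : ∀ t > 0, ‖g t‖ ≤ C / (t * Real.sinh t)) :
    0 ≤ C := by
  have hpos : (0 : ℝ) < 1 * Real.sinh 1 := by simp [Real.sinh_pos_iff]
  simpa using (le_div_iff₀ hpos).1 ((norm_nonneg _).trans (hg 1 one_pos))

lemma norm_mul_one_sub_cosh_le (hg : ∀ t > 0, ‖g t‖ ≤ C / (t * Real.sinh t)) {w : ℂ} {r t : ℝ}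
    (hw : |w.re| ≤ r) (ht : 0 < t) :
    ‖g t * (1 - cosh (t * w))‖ ≤ C * ‖w‖ ^ 2 * ((1 + 2 * t) * Real.exp (-(1 - r) * t)) := by
  have hC := nonneg_of_forall_norm_le_div_mul_sinh hg
  have hcosh : ‖1 - cosh (t * w)‖ ≤ (t * ‖w‖) ^ 2 * Real.cosh (t * w.re) := by
    simpa [norm_sub_rev, re_ofReal_mul, abs_of_pos ht] using norm_cosh_sub_one_le (t * w)
  have hsinh_pos := Real.sinh_pos_iff.2 ht
  calc ‖g t * (1 - cosh (t * w))‖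
      ≤ C / (t * Real.sinh t) * ((t * ‖w‖) ^ 2 * Real.cosh (t * w.re)) := by
        rw [norm_mul]; gcongr; exact hg t ht
    _ = C * ‖w‖ ^ 2 * (t * Real.cosh (t * w.re) / Real.sinh t) := by field_simp
    _ ≤ C * ‖w‖ ^ 2 * ((1 + 2 * t) * Real.exp (-(1 - r) * t)) := by
        gcongr; exact Real.mul_cosh_mul_div_sinh_le ht hw

lemma norm_mul_sinh_mul_le (hg : ∀ t > 0, ‖g t‖ ≤ C / (t * Real.sinh t)) {w : ℂ} {r t : ℝ}
    (hw : |w.re| ≤ r) (ht : 0 < t) :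
    ‖g t * (sinh (t * w) * t)‖ ≤ C * ‖w‖ * ((1 + 2 * t) * Real.exp (-(1 - r) * t)) := by
  have hC := nonneg_of_forall_norm_le_div_mul_sinh hg
  have hsinh : ‖sinh (t * w) * t‖ ≤ t * ‖w‖ * Real.cosh (t * w.re) * t := by
    simpa [re_ofReal_mul, abs_of_pos ht] using
      mul_le_mul_of_nonneg_right (norm_sinh_le (t * w)) (norm_nonneg (t : ℂ))
  have hsinh_pos := Real.sinh_pos_iff.2 ht
  calc ‖g t * (sinh (t * w) * t)‖
      ≤ C / (t * Real.sinh t) * (t * ‖w‖ * Real.cosh (t * w.re) * t) := by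
        rw [norm_mul]; gcongr; exact hg t ht
    _ = C * ‖w‖ * (t * Real.cosh (t * w.re) / Real.sinh t) := by field_simp
    _ ≤ C * ‖w‖ * ((1 + 2 * t) * Real.exp (-(1 - r) * t)) := by
        gcongr; exact Real.mul_cosh_mul_div_sinh_le ht hw

lemma integrableOn_mul_one_sub_cosh (hg_meas : AEStronglyMeasurable g (volume.restrict (Ioi 0)))
    (hg : ∀ t > 0, ‖g t‖ ≤ C / (t * Real.sinh t)) {w : ℂ} (hw : |w.re| < 1) :
    IntegrableOn (fun t : ℝ => g t * (1 - cosh (t * w))) (Ioi 0) := by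
  refine Integrable.mono' (((integrableOn_one_add_two_mul_mul_exp_neg (sub_pos.2 hw)).const_mul
    (C * ‖w‖ ^ 2))) (hg_meas.mul (Continuous.aestronglyMeasurable (by fun_prop))) ?_
  filter_upwards [self_mem_ae_restrict measurableSet_Ioi] with t ht
  simpa [mul_assoc] using norm_mul_one_sub_cosh_le hg le_rfl ht

lemma differentiableOn_integral_mul_one_sub_cosh
    (hg_meas : AEStronglyMeasurable g (volume.restrict (Ioi 0)))
    (hg : ∀ t > 0, ‖g t‖ ≤ C / (t * Real.sinh t)) :
    DifferentiableOn ℂ (fun w : ℂ => ∫ t in Ioi 0, g t * (1 - cosh (t * w)))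
      {w | |w.re| < 1} := by
  intro w₀ hw₀
  replace hw₀ : |w₀.re| < 1 := hw₀
  set r := (1 + |w₀.re|) / 2
  set M := ‖w₀‖ + 1
  have hr : r < 1 := by simp only [r]; linarith
  have hnhds : {w : ℂ | |w.re| < r ∧ ‖w‖ < M} ∈ 𝓝 w₀ := by
    refine IsOpen.mem_nhds ?_ ⟨by simp only [r]; linarith, by simp [M]⟩
    exact (isOpen_lt (continuous_abs.comp continuous_re) continuous_const).inter
      (isOpen_lt continuous_norm continuous_const)
  have hderiv := hasDerivAt_integral_of_dominated_loc_of_deriv_le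
    (F := fun w t => g t * (1 - cosh (t * w))) (F' := fun w t => -(g t * (sinh (t * w) * t)))
    (bound := fun t => C * M * ((1 + 2 * t) * Real.exp (-(1 - r) * t))) hnhds
    (Eventually.of_forall fun w => hg_meas.mul (Continuous.aestronglyMeasurable (by fun_prop)))
    (integrableOn_mul_one_sub_cosh hg_meas hg hw₀)
    (hg_meas.mul (Continuous.aestronglyMeasurable (by fun_prop))).neg ?_
    ((integrableOn_one_add_two_mul_mul_exp_neg (sub_pos.2 hr)).const_mul (C * M)) ?_
  · exact hderiv.2.differentiableAt.differentiableWithinAt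
  · filter_upwards [self_mem_ae_restrict measurableSet_Ioi] with t ht w ⟨hwr, hwM⟩
    rw [norm_neg]
    refine (norm_mul_sinh_mul_le hg hwr.le ht).trans ?_
    have hC := nonneg_of_forall_norm_le_div_mul_sinh hg
    have ht : 0 ≤ t := le_of_lt ht
    gcongr
  · refine Eventually.of_forall fun t w _ => ?_
    simpa using (((hasDerivAt_id w).const_mul (t : ℂ)).ccosh.const_sub 1).const_mul (g t)

end StripIntegral

/-- `fZ N θ t = fZweight N t * (1 - cosh (t * (1 - θ / (I * π))))` holds by `rfl`. -/
noncomputable def fZweight (N : ℕ) (t : ℝ) : ℂ :=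
  (1 / (t : ℂ)) *
    (2 * Complex.sinh ((t : ℂ) * (N - 1) / N) * Complex.cosh ((t : ℂ) / N) /
      (Complex.sinh (t : ℂ)) ^ 2)

lemma measurable_fZweight (N : ℕ) : Measurable (fZweight N) := by
  unfold fZweight; fun_prop

lemma norm_fZweight_le (N : ℕ) {t : ℝ} (ht : 0 < t) :
    ‖fZweight N t‖ ≤ 2 / (t * Real.sinh t) := by
  have hsum : |t * (N - 1) / N| + |t / N| ≤ t := by
    rcases Nat.eq_zero_or_pos N with rfl | hN
    · simpa using ht.le
    · have hN : (1 : ℝ) ≤ N := by exact_mod_cast hN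
      rw [abs_of_nonneg (by have := ht.le; positivity), abs_of_nonneg (by positivity)]
      field_simp
      linarith
  have hreal : fZweight N t = ((1 / t * (2 * (Real.sinh (t * (N - 1) / N) * Real.cosh (t / N)) /
      Real.sinh t ^ 2) : ℝ) : ℂ) := by
    simp only [fZweight]; push_cast; ring
  have hsinh := Real.sinh_pos_iff.2 ht
  rw [hreal, norm_real, Real.norm_eq_abs, abs_mul, abs_of_pos (one_div_pos.2 ht), abs_div, abs_mul,
    abs_two, abs_of_pos (pow_pos hsinh 2)]
  calc 1 / t * (2 * |Real.sinh (t * (N - 1) / N) * Real.cosh (t / N)| / Real.sinh t ^ 2)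
      ≤ 1 / t * (2 * Real.sinh t / Real.sinh t ^ 2) := by
        gcongr; exact Real.abs_sinh_mul_cosh_le hsum
    _ = 2 / (t * Real.sinh t) := by field_simp

lemma abs_re_one_sub_div_I_mul_pi_lt_one {θ : ℂ} (h0 : 0 < θ.im) (h2π : θ.im < 2 * Real.pi) :
    |(1 - θ / (I * Real.pi)).re| < 1 := by
  have hre : (1 - θ / (I * Real.pi)).re = 1 - θ.im / Real.pi := by
    simp [div_eq_mul_inv, Complex.inv_I, sub_eq_add_neg]
  rw [hre, abs_lt]
  constructor
  · linarith [(div_lt_iff₀ Real.pi_pos).2 h2π]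
  · linarith [div_pos h0 Real.pi_pos]

theorem FZhat_integrable_and_holomorphic_general (N : ℕ) :
    (∀ θ : ℂ, 0 < θ.im → θ.im < 2 * Real.pi → IntegrableOn (fZ N θ) (Set.Ioi 0)) ∧
    DifferentiableOn ℂ (FZhat N) {θ : ℂ | 0 < θ.im ∧ θ.im < 2 * Real.pi} := by
  have hmeas := (measurable_fZweight N).aestronglyMeasurable (μ := volume.restrict (Ioi 0))
  have hbound : ∀ t > 0, ‖fZweight N t‖ ≤ 2 / (t * Real.sinh t) := fun t => norm_fZweight_le N
  refine ⟨fun θ h0 h2π => integrableOn_mul_one_sub_cosh hmeas hbound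
    (abs_re_one_sub_div_I_mul_pi_lt_one h0 h2π), ?_⟩
  have hrapidity : DifferentiableOn ℂ (fun θ : ℂ => 1 - θ / (I * Real.pi))
      {θ : ℂ | 0 < θ.im ∧ θ.im < 2 * Real.pi} := by fun_prop
  exact ((differentiableOn_integral_mul_one_sub_cosh hmeas hbound).comp hrapidity
    fun θ ⟨h0, h2π⟩ => abs_re_one_sub_div_I_mul_pi_lt_one h0 h2π).cexp

theorem FZhat_integrable_and_holomorphic (N : ℕ) (hN : 2 ≤ N) :
    (∀ θ : ℂ, 0 < θ.im → θ.im < 2 * Real.pi → IntegrableOn (fZ N θ) (Set.Ioi 0)) ∧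
    DifferentiableOn ℂ (FZhat N) {θ : ℂ | 0 < θ.im ∧ θ.im < 2 * Real.pi} :=
  FZhat_integrable_and_holomorphic_general N
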